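/- Every element of the n-qubit Pauli group commuting with all elements of a Clifford-conjugated standard set is characterized: if Q_U = W†({I,X,Y,Z}^{⊗n1} ⊗ {I,Z}^{⊗n2} ⊗ {I}^{⊗n3})W for a unitary W, then its commutant inside the Pauli group is Q_U^com = W†({I}^{⊗n1} ⊗ {I,Z}^{⊗n2} ⊗ {I,X,Y,Z}^{⊗n3})W. -/

import Mathlib

open Matrix BigOperators

noncomputable section

def pauliMat : Fin 4 → Matrix (Fin 2) (Fin 2) ℂ :=
  ![1, !![0, 1; 1, 0], !![0, -Complex.I; Complex.I, 0], !![1, 0; 0, -1]]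

def PauliOp (n : ℕ) (f : Fin n → Fin 4) :
    Matrix (Fin n → Fin 2) (Fin n → Fin 2) ℂ :=
  fun v w => ∏ i, pauliMat (f i) (v i) (w i)

/-- `f` describes a Pauli in `{I,X,Y,Z}^{⊗n1} ⊗ {I,Z}^{⊗n2} ⊗ {I}^{⊗n3}`:
free on the first block, `I` or `Z` on the middle block, `I` on the last block. -/
def Adm1 (n1 n2 n3 : ℕ) (f : Fin (n1 + n2 + n3) → Fin 4) : Prop :=
  (∀ i : Fin (n1 + n2 + n3), n1 ≤ (i : ℕ) → (i : ℕ) < n1 + n2 → f i = 0 ∨ f i = 3) ∧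
  (∀ i : Fin (n1 + n2 + n3), n1 + n2 ≤ (i : ℕ) → f i = 0)

/-- `g` describes a Pauli in `{I}^{⊗n1} ⊗ {I,Z}^{⊗n2} ⊗ {I,X,Y,Z}^{⊗n3}`. -/
def Adm2 (n1 n2 n3 : ℕ) (g : Fin (n1 + n2 + n3) → Fin 4) : Prop :=
  (∀ i : Fin (n1 + n2 + n3), (i : ℕ) < n1 → g i = 0) ∧
  (∀ i : Fin (n1 + n2 + n3), n1 ≤ (i : ℕ) → (i : ℕ) < n1 + n2 → g i = 0 ∨ g i = 3)

/-!
Two Pauli strings whose factors commute site by site commute. Conversely, if a Pauli string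
commutes with the single-site Pauli `σ` at site `i`, then its factor at `i` commutes with `σ`: in
one matrix entry of the two products every other site contributes the same nonzero factor, which
cancels. So the commutant of `Q_U` is cut out site by site by the one-qubit commutants of
`{I,X,Y,Z}`, `{I,Z}` and `{I}`, and conjugation by the unitary `W` preserves commutation.
-/

theorem commute_conj_iff {M : Type*} [Monoid M] {u v : M} (h : v * u = 1) {a b : M} :
    Commute (u * a * v) (u * b * v) ↔ Commute a b := by
  have conj_mul : ∀ x y : M, u * x * v * (u * y * v) = u * (x * y) * v := fun x y => by
    simp only [mul_assoc]
    rw [← mul_assoc v u, h, one_mul]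
  have conj_injective : ∀ x y : M, u * x * v = u * y * v → x = y := fun x y hxy =>
    calc x = v * u * x * (v * u) := by rw [h, one_mul, mul_one]
      _ = v * (u * x * v) * u := by simp only [mul_assoc]
      _ = v * (u * y * v) * u := by rw [hxy]
      _ = v * u * y * (v * u) := by simp only [mul_assoc]
      _ = y := by rw [h, one_mul, mul_one]
  unfold Commute SemiconjBy
  rw [conj_mul, conj_mul]
  exact ⟨conj_injective _ _, congrArg (u * · * v)⟩

theorem pauliMat_zero : pauliMat 0 = 1 := rfl

theorem exists_pauliMat_apply_ne_zero (a : Fin 4) (x : Fin 2) : ∃ y, pauliMat a x y ≠ 0 := by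
  fin_cases a <;> fin_cases x <;> simp [pauliMat, Fin.exists_fin_two]

theorem commute_pauliMat_three_iff (b : Fin 4) :
    Commute (pauliMat b) (pauliMat 3) ↔ b = 0 ∨ b = 3 := by
  fin_cases b <;> simp [Commute, SemiconjBy, pauliMat, Complex.ext_iff] <;> norm_num

theorem commute_pauliMat_one_and_three_iff (b : Fin 4) :
    Commute (pauliMat b) (pauliMat 1) ∧ Commute (pauliMat b) (pauliMat 3) ↔ b = 0 := by
  fin_cases b <;> simp [Commute, SemiconjBy, pauliMat, Complex.ext_iff] <;> norm_num

theorem pauliOp_mul_apply {n : ℕ} (f g : Fin n → Fin 4) (v w : Fin n → Fin 2) :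
    (PauliOp n f * PauliOp n g) v w = ∏ i, (pauliMat (f i) * pauliMat (g i)) (v i) (w i) := by
  simp only [Matrix.mul_apply, PauliOp, ← Finset.prod_mul_distrib]
  rw [Finset.prod_univ_sum, Fintype.piFinset_univ]

theorem commute_pauliOp_of_forall_commute {n : ℕ} {f g : Fin n → Fin 4}
    (h : ∀ i, Commute (pauliMat (f i)) (pauliMat (g i))) :
    Commute (PauliOp n f) (PauliOp n g) := by
  ext v w
  rw [pauliOp_mul_apply, pauliOp_mul_apply]
  exact Finset.prod_congr rfl fun i _ => by rw [(h i).eq]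

theorem commute_pauliMat_of_commute_pauliOp_single {n : ℕ} {g : Fin n → Fin 4} {i : Fin n}
    {a : Fin 4} (h : Commute (PauliOp n g) (PauliOp n (Pi.single i a))) :
    Commute (pauliMat (g i)) (pauliMat a) := by
  choose col hcol using fun j => exists_pauliMat_apply_ne_zero (g j) 0
  ext x y
  set v : Fin n → Fin 2 := Function.update 0 i x
  set w : Fin n → Fin 2 := Function.update col i y
  set σ : Fin n → Fin 4 := Pi.single i a
  have hsingle : ∀ j ∈ Finset.univ.erase i, pauliMat (σ j) = 1 :=
    fun j hj => by simp [σ, Finset.ne_of_mem_erase hj, pauliMat_zero]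
  have hleft : ∏ j ∈ Finset.univ.erase i, (pauliMat (g j) * pauliMat (σ j)) (v j) (w j)
      = ∏ j ∈ Finset.univ.erase i, pauliMat (g j) (v j) (w j) :=
    Finset.prod_congr rfl fun j hj => by rw [hsingle j hj, mul_one]
  have hright : ∏ j ∈ Finset.univ.erase i, (pauliMat (σ j) * pauliMat (g j)) (v j) (w j)
      = ∏ j ∈ Finset.univ.erase i, pauliMat (g j) (v j) (w j) :=
    Finset.prod_congr rfl fun j hj => by rw [hsingle j hj, one_mul]
  have hentry := congrFun (congrFun h v) w
  rw [pauliOp_mul_apply, pauliOp_mul_apply, ← Finset.mul_prod_erase _ _ (Finset.mem_univ i),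
    ← Finset.mul_prod_erase _ _ (Finset.mem_univ i), hleft, hright] at hentry
  have hoff : ∏ j ∈ Finset.univ.erase i, pauliMat (g j) (v j) (w j) ≠ 0 :=
    Finset.prod_ne_zero_iff.2 fun j hj => by simpa [v, w, Finset.ne_of_mem_erase hj] using hcol j
  simpa [v, w, σ] using mul_right_cancel₀ hoff hentry

section Blocks

variable {n1 n2 n3 : ℕ}

theorem adm1_single_of_lt {i : Fin (n1 + n2 + n3)} (hi : (i : ℕ) < n1) (a : Fin 4) :
    Adm1 n1 n2 n3 (Pi.single i a) :=
  have hne : ∀ j : Fin (n1 + n2 + n3), n1 ≤ (j : ℕ) → j ≠ i := fun j hj =>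
    Fin.ne_of_val_ne (by omega)
  ⟨fun j hj _ => Or.inl (by simp [hne j hj]), fun j hj => by simp [hne j (by omega)]⟩

theorem adm1_single_three {i : Fin (n1 + n2 + n3)} (hi : (i : ℕ) < n1 + n2) :
    Adm1 n1 n2 n3 (Pi.single i 3) := by
  refine ⟨fun j _ _ => ?_, fun j hj => by simp [show j ≠ i from Fin.ne_of_val_ne (by omega)]⟩
  by_cases hji : j = i <;> simp [hji]

theorem commute_pauliMat_of_adm1_of_adm2 {f g : Fin (n1 + n2 + n3) → Fin 4}
    (hf : Adm1 n1 n2 n3 f) (hg : Adm2 n1 n2 n3 g) (i : Fin (n1 + n2 + n3)) :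
    Commute (pauliMat (g i)) (pauliMat (f i)) := by
  rcases lt_or_ge (i : ℕ) n1 with h1 | h1
  · rw [hg.1 i h1, pauliMat_zero]
    exact Commute.one_left _
  rcases lt_or_ge (i : ℕ) (n1 + n2) with h2 | h2
  · rcases hg.2 i h1 h2 with hgi | hgi <;> rcases hf.1 i h1 h2 with hfi | hfi <;>
      simp [hgi, hfi, pauliMat_zero, Commute.refl]
  · rw [hf.2 i h2, pauliMat_zero]
    exact Commute.one_right _

end Blocks

theorem pauli_commutant_characterization_general (n1 n2 n3 : ℕ)
    (W : Matrix (Fin (n1 + n2 + n3) → Fin 2) (Fin (n1 + n2 + n3) → Fin 2) ℂ)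
    (hW' : W * Wᴴ = 1) :
    {M : Matrix (Fin (n1 + n2 + n3) → Fin 2) (Fin (n1 + n2 + n3) → Fin 2) ℂ |
      ∃ g : Fin (n1 + n2 + n3) → Fin 4,
        M = Wᴴ * PauliOp (n1 + n2 + n3) g * W ∧
        ∀ f : Fin (n1 + n2 + n3) → Fin 4, Adm1 n1 n2 n3 f →
          M * (Wᴴ * PauliOp (n1 + n2 + n3) f * W)
            = (Wᴴ * PauliOp (n1 + n2 + n3) f * W) * M}
    = {M | ∃ g : Fin (n1 + n2 + n3) → Fin 4, Adm2 n1 n2 n3 g ∧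
        M = Wᴴ * PauliOp (n1 + n2 + n3) g * W} := by
  ext M
  constructor
  · rintro ⟨g, rfl, hcomm⟩
    have hsite : ∀ i a, Adm1 n1 n2 n3 (Pi.single i a) → Commute (pauliMat (g i)) (pauliMat a) :=
      fun i a ha => commute_pauliMat_of_commute_pauliOp_single
        ((commute_conj_iff hW').1 (hcomm _ ha))
    refine ⟨g, ⟨fun i hi => ?_, fun i _ hi => ?_⟩, rfl⟩
    · exact (commute_pauliMat_one_and_three_iff _).1
        ⟨hsite i 1 (adm1_single_of_lt hi 1), hsite i 3 (adm1_single_of_lt hi 3)⟩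
    · exact (commute_pauliMat_three_iff _).1 (hsite i 3 (adm1_single_three hi))
  · rintro ⟨g, hg, rfl⟩
    exact ⟨g, rfl, fun f hf => (commute_conj_iff hW').2
      (commute_pauliOp_of_forall_commute (commute_pauliMat_of_adm1_of_adm2 hf hg))⟩

/-- The commutant, inside the (conjugated) Pauli group, of
`Q_U = W†({I,X,Y,Z}^{⊗n1} ⊗ {I,Z}^{⊗n2} ⊗ {I}^{⊗n3})W` is exactly
`W†({I}^{⊗n1} ⊗ {I,Z}^{⊗n2} ⊗ {I,X,Y,Z}^{⊗n3})W`. -/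
theorem pauli_commutant_characterization (n1 n2 n3 : ℕ)
    (W : Matrix (Fin (n1 + n2 + n3) → Fin 2) (Fin (n1 + n2 + n3) → Fin 2) ℂ)
    (hW : Wᴴ * W = 1) (hW' : W * Wᴴ = 1) :
    {M : Matrix (Fin (n1 + n2 + n3) → Fin 2) (Fin (n1 + n2 + n3) → Fin 2) ℂ |
      ∃ g : Fin (n1 + n2 + n3) → Fin 4,
        M = Wᴴ * PauliOp (n1 + n2 + n3) g * W ∧
        ∀ f : Fin (n1 + n2 + n3) → Fin 4, Adm1 n1 n2 n3 f →
          M * (Wᴴ * PauliOp (n1 + n2 + n3) f * W)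
            = (Wᴴ * PauliOp (n1 + n2 + n3) f * W) * M}
    = {M | ∃ g : Fin (n1 + n2 + n3) → Fin 4, Adm2 n1 n2 n3 g ∧
        M = Wᴴ * PauliOp (n1 + n2 + n3) g * W} :=
  pauli_commutant_characterization_general n1 n2 n3 W hW'
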